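/- arXiv:2503.08097 — 3 statements merged into one kernel-verified Lean document; each statement's English description precedes it below -/
import Mathlib

section
/- For a constant a with 0 < a < 1, the function υ(x) = ψ(x+2) − ψ(a(x+2)), where ψ is the digamma function, is strictly monotonically decreasing on (0, ∞). -/
/-- The digamma function `ψ(x) = d/dx log Γ(x)`. -/
noncomputable def digamma (x : ℝ) : ℝ := deriv (fun y => Real.log (Real.Gamma y)) x

open Real Set Filter Topology MeasureTheory

namespace UpsilonAux

noncomputable def f : ℝ → ℝ := fun y => Real.log (Real.Gamma y)

lemma hder {x : ℝ} (hx : 0 < x) : DifferentiableAt ℝ f x := by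
  refine (Real.differentiableAt_Gamma ?_).log (Real.Gamma_ne_zero ?_) <;>
    · intro m
      have hm : (0:ℝ) ≤ m := Nat.cast_nonneg m
      exact ne_of_gt (by linarith)

lemma h_rec {x : ℝ} (hx : 0 < x) : f (x + 1) = f x + Real.log x := by
  simp only [f, Real.Gamma_add_one hx.ne',
    Real.log_mul hx.ne' (Real.Gamma_pos_of_pos hx).ne', add_comm]

lemma digamma_rec {x : ℝ} (hx : 0 < x) : digamma (x + 1) = digamma x + 1 / x := by
  show deriv f (x + 1) = deriv f x + 1 / x
  rw [← deriv_comp_add_const, one_div, ← Real.deriv_log, ← deriv_add (hder hx)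
    (Real.differentiableAt_log hx.ne')]
  apply Filter.EventuallyEq.deriv_eq
  filter_upwards [eventually_gt_nhds hx] with y hy
  exact h_rec hy

lemma digamma_le_log {v : ℝ} (hv : 0 < v) : digamma v ≤ Real.log v := by
  have h := Real.convexOn_log_Gamma.deriv_le_slope (Set.mem_Ioi.mpr hv)
    (Set.mem_Ioi.mpr (by linarith : (0:ℝ) < v + 1)) (by linarith) (hder hv)
  rw [slope_def_field] at h
  have hv1 : v + 1 - v = (1:ℝ) := by ring
  rw [hv1, div_one] at h
  have : (Real.log ∘ Real.Gamma) (v + 1) - (Real.log ∘ Real.Gamma) v = Real.log v := by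
    have := h_rec hv
    simp only [Function.comp_apply, f] at this ⊢
    rw [this]; ring
  rw [this] at h
  exact h

lemma log_le_digamma {v : ℝ} (hv : 1 < v) : Real.log (v - 1) ≤ digamma v := by
  have h := Real.convexOn_log_Gamma.slope_le_deriv (Set.mem_Ioi.mpr (by linarith : (0:ℝ) < v - 1))
    (Set.mem_Ioi.mpr (by linarith : (0:ℝ) < v)) (by linarith) (hder (by linarith))
  rw [slope_def_field] at h
  have hv1 : v - (v - 1) = (1:ℝ) := by ring
  rw [hv1, div_one] at h
  have : (Real.log ∘ Real.Gamma) v - (Real.log ∘ Real.Gamma) (v - 1) = Real.log (v - 1) := by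
    have h2 := h_rec (show (0:ℝ) < v - 1 by linarith)
    rw [show v - 1 + 1 = v by ring] at h2
    simp only [Function.comp_apply, f] at h2 ⊢
    rw [h2]; ring
  rw [this] at h
  exact h

lemma digamma_add_nat {u : ℝ} (hu : 0 < u) (n : ℕ) :
    digamma (u + n) = digamma u + ∑ k ∈ Finset.range n, 1 / (u + k) := by
  induction n with
  | zero => simp
  | succ n ih =>
    have h1 : (0:ℝ) < u + n := by positivity
    have h2 := digamma_rec h1
    push_cast
    rw [show u + ((n : ℝ) + 1) = (u + n) + 1 by ring, h2, ih, Finset.sum_range_succ]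
    ring

lemma tendsto_log_sub (c d : ℝ) :
    Tendsto (fun n : ℕ => Real.log (c + n) - Real.log (d + n)) atTop (𝓝 0) := by
  have hd : Tendsto (fun n : ℕ => d + (n : ℝ)) atTop atTop :=
    tendsto_atTop_add_const_left _ _ tendsto_natCast_atTop_atTop
  have h1 : Tendsto (fun n : ℕ => (c - d) / (d + n)) atTop (𝓝 0) :=
    Tendsto.div_atTop tendsto_const_nhds hd
  have h2 : Tendsto (fun n : ℕ => 1 + (c - d) / (d + n)) atTop (𝓝 1) := by
    simpa using tendsto_const_nhds.add h1
  have h3 : Tendsto (fun n : ℕ => Real.log (1 + (c - d) / (d + n))) atTop (𝓝 0) := by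
    have := (Real.continuousAt_log (one_ne_zero)).tendsto.comp h2
    simpa [Function.comp_def] using this
  apply h3.congr'
  have hc' : ∀ᶠ n : ℕ in atTop, (0:ℝ) < c + n := by
    have := tendsto_atTop_add_const_left _ c (tendsto_natCast_atTop_atTop (R := ℝ))
    exact this.eventually_gt_atTop 0
  have hd' : ∀ᶠ n : ℕ in atTop, (0:ℝ) < d + n := hd.eventually_gt_atTop 0
  filter_upwards [hc', hd'] with n hc0 hd0
  rw [show 1 + (c - d) / (d + n) = (c + n) / (d + n) by field_simp; ring,
    Real.log_div hc0.ne' hd0.ne']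

lemma hasSum_digamma_sub {u v : ℝ} (hu : 0 < u) (huv : u < v) :
    HasSum (fun k : ℕ => 1 / (u + k) - 1 / (v + k)) (digamma v - digamma u) := by
  have hv : 0 < v := hu.trans huv
  have hterm : ∀ k : ℕ, 0 ≤ 1 / (u + k) - 1 / (v + k) := by
    intro k
    have h1 : (0:ℝ) < u + k := by positivity
    rw [sub_nonneg]
    exact one_div_le_one_div_of_le h1 (by linarith)
  rw [hasSum_iff_tendsto_nat_of_nonneg hterm]
  have hps : ∀ n : ℕ, ∑ k ∈ Finset.range n, (1 / (u + k) - 1 / (v + k))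
      = (digamma v - digamma u) + (digamma (u + n) - digamma (v + n)) := by
    intro n
    rw [Finset.sum_sub_distrib]
    linarith [digamma_add_nat hu n, digamma_add_nat hv n]
  have hsq : Tendsto (fun n : ℕ => digamma (u + n) - digamma (v + n)) atTop (𝓝 0) := by
    apply tendsto_of_tendsto_of_tendsto_of_le_of_le'
      (tendsto_log_sub (u - 1) v) (tendsto_log_sub u (v - 1))
    · filter_upwards [eventually_ge_atTop 1] with n hn
      have hn1 : (1:ℝ) ≤ n := by exact_mod_cast hn
      have hb1 : Real.log (u + n - 1) ≤ digamma (u + n) := log_le_digamma (by linarith)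
      have hb2 : digamma (v + n) ≤ Real.log (v + n) := digamma_le_log (by linarith)
      have : u - 1 + n = u + n - 1 := by ring
      rw [this]
      linarith
    · filter_upwards [eventually_ge_atTop 1] with n hn
      have hn1 : (1:ℝ) ≤ n := by exact_mod_cast hn
      have hb1 : digamma (u + n) ≤ Real.log (u + n) := digamma_le_log (by linarith)
      have hb2 : Real.log (v + n - 1) ≤ digamma (v + n) := log_le_digamma (by linarith)
      have : v - 1 + n = v + n - 1 := by ring
      rw [this]
      linarith
  have := tendsto_const_nhds (x := digamma v - digamma u) (f := atTop (α := ℕ)) |>.add hsq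
  rw [add_zero] at this
  exact this.congr (fun n => (hps n).symm)

lemma integral_exp_neg_mul {b : ℝ} (hb : 0 < b) :
    ∫ v in Ioi (0:ℝ), Real.exp (-(b * v)) = b⁻¹ := by
  have h := integral_comp_mul_left_Ioi (fun x => Real.exp (-x)) 0 hb
  rw [mul_zero, integral_exp_neg_Ioi_zero, smul_eq_mul, mul_one] at h
  exact h

lemma integrableOn_exp_neg_mul {b : ℝ} (hb : 0 < b) :
    IntegrableOn (fun v => Real.exp (-(b * v))) (Ioi (0:ℝ)) := by
  have := exp_neg_integrableOn_Ioi 0 hb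
  simpa [neg_mul] using this

variable {l t : ℝ}

/-- The integrand for one term of the geometric expansion. -/
noncomputable def term (l t : ℝ) (k : ℕ) (v : ℝ) : ℝ :=
  (Real.exp (-v) - Real.exp (-(l * v))) * Real.exp (-(k * v / t)) / t

lemma term_eq (hl : 1 < l) (ht : 0 < t) (k : ℕ) (v : ℝ) :
    term l t k v = t⁻¹ * Real.exp (-((1 + k / t) * v)) - t⁻¹ * Real.exp (-((l + k / t) * v)) := by
  unfold term
  rw [sub_mul, sub_div, ← Real.exp_add, ← Real.exp_add, div_eq_inv_mul, div_eq_inv_mul]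
  congr 2
  · field_simp; ring
  · field_simp; ring

lemma integrable_term (hl : 1 < l) (ht : 0 < t) (k : ℕ) :
    IntegrableOn (term l t k) (Ioi (0:ℝ)) := by
  have hb1 : (0:ℝ) < 1 + k / t := by positivity
  have hb2 : (0:ℝ) < l + k / t := by
    have : (0:ℝ) ≤ k / t := by positivity
    linarith
  have h1 := (integrableOn_exp_neg_mul hb1).const_mul t⁻¹
  have h2 := (integrableOn_exp_neg_mul hb2).const_mul t⁻¹
  refine MeasureTheory.IntegrableOn.congr_fun (h1.sub h2) ?_ measurableSet_Ioi
  intro v _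
  simp only [Pi.sub_apply]
  exact (term_eq hl ht k v).symm

lemma integral_term (hl : 1 < l) (ht : 0 < t) (k : ℕ) :
    ∫ v in Ioi (0:ℝ), term l t k v = 1 / (t + k) - 1 / (l * t + k) := by
  have hb1 : (0:ℝ) < 1 + k / t := by positivity
  have hb2 : (0:ℝ) < l + k / t := by
    have : (0:ℝ) ≤ k / t := by positivity
    linarith
  rw [setIntegral_congr_fun measurableSet_Ioi (fun v _ => term_eq hl ht k v),
    integral_sub ((integrableOn_exp_neg_mul hb1).const_mul t⁻¹)
      ((integrableOn_exp_neg_mul hb2).const_mul t⁻¹),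
    integral_const_mul, integral_const_mul, integral_exp_neg_mul hb1, integral_exp_neg_mul hb2]
  have h1 : t + (k:ℝ) ≠ 0 := by positivity
  have h2 : l * t + (k:ℝ) ≠ 0 := by
    have : 0 < l * t := by nlinarith
    positivity
  field_simp

lemma term_nonneg (hl : 1 < l) (ht : 0 < t) (k : ℕ) {v : ℝ} (hv : 0 ≤ v) :
    0 ≤ term l t k v := by
  unfold term
  have : Real.exp (-(l * v)) ≤ Real.exp (-v) := by
    apply Real.exp_le_exp.mpr
    nlinarith
  have h1 : 0 ≤ Real.exp (-v) - Real.exp (-(l * v)) := by linarith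
  positivity

lemma lintegral_term (hl : 1 < l) (ht : 0 < t) (k : ℕ) :
    ∫⁻ v in Ioi (0:ℝ), ENNReal.ofReal (term l t k v)
      = ENNReal.ofReal (1 / (t + k) - 1 / (l * t + k)) := by
  rw [← ofReal_integral_eq_lintegral_ofReal (integrable_term hl ht k)
    (((ae_restrict_iff' measurableSet_Ioi).mpr (ae_of_all _ fun v hv =>
      term_nonneg hl ht k (le_of_lt hv)))), integral_term hl ht k]

lemma tsum_ofReal_term (hl : 1 < l) (ht : 0 < t) {v : ℝ} (hv : 0 < v) :
    ∑' k : ℕ, ENNReal.ofReal (term l t k v)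
      = ENNReal.ofReal ((Real.exp (-v) - Real.exp (-(l * v)))
          / (t * (1 - Real.exp (-(v / t))))) := by
  set c : ℝ := (Real.exp (-v) - Real.exp (-(l * v))) / t with hc_def
  set r : ℝ := Real.exp (-(v / t)) with hr_def
  have hr0 : 0 ≤ r := (Real.exp_pos _).le
  have hr1 : r < 1 := by
    rw [hr_def, Real.exp_lt_one_iff]
    have : 0 < v / t := div_pos hv ht
    linarith
  have hc0 : 0 ≤ c := by
    have : Real.exp (-(l * v)) ≤ Real.exp (-v) := by
      apply Real.exp_le_exp.mpr; nlinarith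
    apply div_nonneg (by linarith) ht.le
  have hterm : ∀ k : ℕ, term l t k v = c * r ^ k := by
    intro k
    unfold term
    rw [hr_def, show -((k:ℝ) * v / t) = (k : ℝ) * -(v / t) by ring, Real.exp_nat_mul, hc_def]
    ring
  simp only [hterm]
  rw [← ENNReal.ofReal_tsum_of_nonneg (fun k => mul_nonneg hc0 (pow_nonneg hr0 k))
    ((summable_geometric_of_lt_one hr0 hr1).mul_left c), tsum_mul_left,
    tsum_geometric_of_lt_one hr0 hr1]
  congr 1
  have ht' : t ≠ 0 := ht.ne'
  have hr1' : 1 - r ≠ 0 := by linarith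
  rw [hc_def]
  field_simp

/-- The closed-form integrand. -/
noncomputable def closedForm (l t v : ℝ) : ℝ :=
  (Real.exp (-v) - Real.exp (-(l * v))) / (t * (1 - Real.exp (-(v / t))))

lemma summable_r (hl : 1 < l) (ht : 0 < t) :
    Summable (fun k : ℕ => 1 / (t + k) - 1 / (l * t + k)) :=
  (hasSum_digamma_sub ht (by nlinarith : t < l * t)).summable

lemma r_nonneg (hl : 1 < l) (ht : 0 < t) (k : ℕ) :
    0 ≤ 1 / (t + (k:ℝ)) - 1 / (l * t + k) := by
  have h1 : (0:ℝ) < t + k := by positivity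
  rw [sub_nonneg]
  apply one_div_le_one_div_of_le h1
  nlinarith

lemma lintegral_closed (hl : 1 < l) (ht : 0 < t) :
    ∫⁻ v in Ioi (0:ℝ), ENNReal.ofReal (closedForm l t v)
      = ENNReal.ofReal (digamma (l * t) - digamma t) := by
  have hmeas : ∀ k : ℕ, AEMeasurable (fun v => ENNReal.ofReal (term l t k v))
      (volume.restrict (Ioi (0:ℝ))) := by
    intro k
    apply Measurable.aemeasurable
    apply ENNReal.measurable_ofReal.comp
    unfold term
    fun_prop
  have h1 : ∫⁻ v in Ioi (0:ℝ), ENNReal.ofReal (closedForm l t v)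
      = ∫⁻ v in Ioi (0:ℝ), ∑' k : ℕ, ENNReal.ofReal (term l t k v) := by
    apply setLIntegral_congr_fun measurableSet_Ioi
    intro v hv
    exact (tsum_ofReal_term hl ht hv).symm
  rw [h1, lintegral_tsum hmeas, tsum_congr (fun k => lintegral_term hl ht k),
    ← ENNReal.ofReal_tsum_of_nonneg (r_nonneg hl ht) (summable_r hl ht)]
  congr 1
  exact (hasSum_digamma_sub ht (by nlinarith : t < l * t)).tsum_eq

lemma one_sub_exp_div_strictAnti : StrictAntiOn (fun s : ℝ => (1 - Real.exp (-s)) / s) (Ioi 0) := by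
  apply strictAntiOn_of_deriv_neg (convex_Ioi 0)
  · apply ContinuousOn.div
    · fun_prop
    · exact continuousOn_id
    · exact fun x hx => ne_of_gt hx
  · intro s hs
    rw [interior_Ioi] at hs
    have hs0 : (0:ℝ) < s := hs
    have h1 : HasDerivAt (fun s : ℝ => 1 - Real.exp (-s)) (Real.exp (-s)) s := by
      have h0 : HasDerivAt (fun s : ℝ => Real.exp (-s)) (Real.exp (-s) * (-1)) s :=
        (Real.hasDerivAt_exp (-s)).comp s (hasDerivAt_neg s)
      simpa using h0.const_sub 1
    have h2 : HasDerivAt (fun s : ℝ => (1 - Real.exp (-s)) / s)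
        ((Real.exp (-s) * s - (1 - Real.exp (-s)) * 1) / s ^ 2) s :=
      h1.div (hasDerivAt_id s) hs0.ne'
    rw [h2.deriv]
    apply div_neg_of_neg_of_pos _ (by positivity)
    have hkey : s + 1 < Real.exp s := Real.add_one_lt_exp hs0.ne'
    have he : Real.exp (-s) * Real.exp s = 1 := by
      rw [← Real.exp_add]; simp
    nlinarith [Real.exp_pos s, Real.exp_pos (-s)]

lemma denom_lt {t1 t2 v : ℝ} (h1 : 0 < t1) (h12 : t1 < t2) (hv : 0 < v) :
    t1 * (1 - Real.exp (-(v / t1))) < t2 * (1 - Real.exp (-(v / t2))) := by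
  have h2 : (0:ℝ) < t2 := h1.trans h12
  have hlt : v / t2 < v / t1 := by
    rw [div_lt_div_iff₀ h2 h1]
    nlinarith
  have key := one_sub_exp_div_strictAnti (Set.mem_Ioi.mpr (div_pos hv h2))
    (Set.mem_Ioi.mpr (div_pos hv h1)) hlt
  have e1 : (1 - Real.exp (-(v / t1))) / (v / t1) * v = t1 * (1 - Real.exp (-(v / t1))) := by
    field_simp
  have e2 : (1 - Real.exp (-(v / t2))) / (v / t2) * v = t2 * (1 - Real.exp (-(v / t2))) := by
    field_simp
  have := mul_lt_mul_of_pos_right key hv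
  rw [e1, e2] at this
  exact this

lemma closedForm_pos (hl : 1 < l) (ht : 0 < t) {v : ℝ} (hv : 0 < v) :
    0 < closedForm l t v := by
  unfold closedForm
  apply div_pos
  · rw [sub_pos]
    apply Real.exp_lt_exp.mpr
    nlinarith
  · apply mul_pos ht
    rw [sub_pos, Real.exp_lt_one_iff]
    have : 0 < v / t := div_pos hv ht
    linarith

lemma closedForm_lt (hl : 1 < l) {t1 t2 v : ℝ} (h1 : 0 < t1) (h12 : t1 < t2) (hv : 0 < v) :
    closedForm l t2 v < closedForm l t1 v := by
  unfold closedForm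
  have hN : 0 < Real.exp (-v) - Real.exp (-(l * v)) := by
    rw [sub_pos]
    apply Real.exp_lt_exp.mpr
    nlinarith
  have hD1 : 0 < t1 * (1 - Real.exp (-(v / t1))) := by
    apply mul_pos h1
    rw [sub_pos, Real.exp_lt_one_iff]
    have : 0 < v / t1 := div_pos hv h1
    linarith
  exact div_lt_div_of_pos_left hN hD1 (denom_lt h1 h12 hv)

lemma L_strict (hl : 1 < l) {t1 t2 : ℝ} (h1 : 0 < t1) (h12 : t1 < t2) :
    ∫⁻ v in Ioi (0:ℝ), ENNReal.ofReal (closedForm l t2 v)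
      < ∫⁻ v in Ioi (0:ℝ), ENNReal.ofReal (closedForm l t1 v) := by
  apply setLIntegral_strict_mono measurableSet_Ioi
  · simp [Real.volume_Ioi]
  · apply ENNReal.measurable_ofReal.comp
    unfold closedForm
    fun_prop
  · rw [lintegral_closed hl (h1.trans h12)]
    exact ENNReal.ofReal_ne_top
  · apply ae_of_all
    intro v hv
    rw [ENNReal.ofReal_lt_ofReal_iff (closedForm_pos hl h1 hv)]
    exact closedForm_lt hl h1 h12 hv

end UpsilonAux

/-- For `0 < a < 1`, the function `υ(x) = ψ(x+2) − ψ(a(x+2))` is strictly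
monotonically decreasing on `(0, ∞)`. -/
theorem upsilon_strictAntiOn (a : ℝ) (ha0 : 0 < a) (ha1 : a < 1) :
    StrictAntiOn (fun x : ℝ => digamma (x + 2) - digamma (a * (x + 2))) (Set.Ioi 0) := by
  intro x1 hx1 x2 hx2 h12
  rw [Set.mem_Ioi] at hx1 hx2
  have hl : 1 < a⁻¹ := (one_lt_inv₀ ha0).mpr ha1
  have key : ∀ x : ℝ, 0 < x → digamma (x + 2) - digamma (a * (x + 2))
      = (∫⁻ v in Set.Ioi (0:ℝ),
          ENNReal.ofReal (UpsilonAux.closedForm a⁻¹ (a * (x + 2)) v)).toReal := by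
    intro x hx
    have ht : 0 < a * (x + 2) := by nlinarith
    rw [UpsilonAux.lintegral_closed hl ht,
      show a⁻¹ * (a * (x + 2)) = x + 2 from inv_mul_cancel_left₀ ha0.ne' _,
      ENNReal.toReal_ofReal]
    have hsum := UpsilonAux.hasSum_digamma_sub ht (show a * (x + 2) < x + 2 by nlinarith)
    refine hsum.nonneg fun k => ?_
    have h1 : (0:ℝ) < a * (x + 2) + k := by positivity
    rw [sub_nonneg]
    exact one_div_le_one_div_of_le h1 (by nlinarith)
  show digamma (x2 + 2) - digamma (a * (x2 + 2)) < digamma (x1 + 2) - digamma (a * (x1 + 2))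
  rw [key x1 hx1, key x2 hx2]
  have ht1 : 0 < a * (x1 + 2) := by nlinarith
  have ht2 : 0 < a * (x2 + 2) := by nlinarith
  have hs : a * (x1 + 2) < a * (x2 + 2) := by nlinarith
  have hfin1 : (∫⁻ v in Set.Ioi (0:ℝ),
      ENNReal.ofReal (UpsilonAux.closedForm a⁻¹ (a * (x1 + 2)) v)) ≠ ⊤ := by
    rw [UpsilonAux.lintegral_closed hl ht1]; exact ENNReal.ofReal_ne_top
  have hfin2 : (∫⁻ v in Set.Ioi (0:ℝ),
      ENNReal.ofReal (UpsilonAux.closedForm a⁻¹ (a * (x2 + 2)) v)) ≠ ⊤ := by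
    rw [UpsilonAux.lintegral_closed hl ht2]; exact ENNReal.ofReal_ne_top
  rw [ENNReal.toReal_lt_toReal hfin2 hfin1]
  exact UpsilonAux.L_strict hl ht1 hs
end

section
/- For a constant a with 0 < a < 1, the function υ(x) = ψ(x+2) − ψ(a(x+2)) satisfies υ(x) > −ln(a) for all x > 0. -/
open Real Set Filter

private lemma digamma_diff {x : ℝ} (hx : 0 < x) :
    DifferentiableAt ℝ (fun y => Real.log (Real.Gamma y)) x :=
  (Real.differentiableAt_Gamma fun m =>
    ((neg_nonpos.mpr (Nat.cast_nonneg m)).trans_lt hx).ne').log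
    (Real.Gamma_pos_of_pos hx).ne'

private lemma digamma_rec {x : ℝ} (hx : 0 < x) :
    digamma (x + 1) = digamma x + 1 / x := by
  unfold digamma
  rw [← deriv_comp_add_const, one_div, ← Real.deriv_log,
    ← deriv_fun_add (digamma_diff hx) (Real.differentiableAt_log hx.ne')]
  apply Filter.EventuallyEq.deriv_eq
  filter_upwards [eventually_gt_nhds hx] with t ht
  rw [Real.Gamma_add_one ht.ne', Real.log_mul ht.ne' (Real.Gamma_pos_of_pos ht).ne', add_comm]

private lemma digamma_le_log {x : ℝ} (hx : 0 < x) : digamma x ≤ Real.log x := by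
  have h := Real.convexOn_log_Gamma.deriv_le_slope (mem_Ioi.mpr hx)
    (mem_Ioi.mpr (by linarith : (0:ℝ) < x + 1)) (by linarith) (digamma_diff hx)
  rwa [slope_def_field, show x + 1 - x = (1:ℝ) by ring, div_one, Function.comp_apply,
    Function.comp_apply, Real.Gamma_add_one hx.ne',
    Real.log_mul hx.ne' (Real.Gamma_pos_of_pos hx).ne', add_sub_cancel_right] at h

private lemma log_le_digamma_add_one {x : ℝ} (hx : 0 < x) : Real.log x ≤ digamma (x + 1) := by
  have h := Real.convexOn_log_Gamma.slope_le_deriv (mem_Ioi.mpr hx)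
    (mem_Ioi.mpr (by linarith : (0:ℝ) < x + 1)) (by linarith)
    (digamma_diff (by linarith : (0:ℝ) < x + 1))
  rwa [slope_def_field, show x + 1 - x = (1:ℝ) by ring, div_one, Function.comp_apply,
    Function.comp_apply, Real.Gamma_add_one hx.ne',
    Real.log_mul hx.ne' (Real.Gamma_pos_of_pos hx).ne', add_sub_cancel_right] at h

private lemma log_sub_le_digamma {x : ℝ} (hx : 0 < x) : Real.log x - 1 / x ≤ digamma x := by
  have h := log_le_digamma_add_one hx
  rw [digamma_rec hx] at h
  linarith

/-- For `0 < a < 1`, `υ(x) = ψ(x+2) − ψ(a(x+2)) > −ln a` for all `x > 0`. -/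
theorem upsilon_gt_neg_log (a : ℝ) (ha0 : 0 < a) (ha1 : a < 1) :
    ∀ x : ℝ, 0 < x → -Real.log a < digamma (x + 2) - digamma (a * (x + 2)) := by
  intro x hx
  set y : ℝ := x + 2 with hy
  have hy0 : 0 < y := by positivity
  set b : ℝ := a * y with hb
  have hb0 : 0 < b := mul_pos ha0 hy0
  have hby : b < y := by nlinarith
  -- telescoping via the recurrence
  have key : ∀ n : ℕ, digamma y - digamma b
      = digamma (y + n) - digamma (b + n)
        + ∑ k ∈ Finset.range n, (1 / (b + k) - 1 / (y + k)) := by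
    intro n
    induction n with
    | zero => simp
    | succ n ih =>
      have e1 : y + ((n : ℝ) + 1) = (y + n) + 1 := by ring
      have e2 : b + ((n : ℝ) + 1) = (b + n) + 1 := by ring
      have h1 : digamma (y + ((n : ℕ) + 1 : ℕ)) = digamma (y + n) + 1 / (y + n) := by
        push_cast
        rw [e1, digamma_rec (by positivity)]
      have h2 : digamma (b + ((n : ℕ) + 1 : ℕ)) = digamma (b + n) + 1 / (b + n) := by
        push_cast
        rw [e2, digamma_rec (by positivity)]
      rw [Finset.sum_range_succ, h1, h2]
      rw [ih]
      ring
  set g : ℕ → ℝ := fun k => Real.log ((y + k) / (b + k)) with hg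
  have hgk : ∀ k : ℕ, g k - g (k + 1) < 1 / (b + k) - 1 / (y + k) := by
    intro k
    have hu : (0:ℝ) < y + k := by positivity
    have hv : (0:ℝ) < b + k := by positivity
    set r : ℝ := (y + k) * (b + k + 1) / ((b + k) * (y + k + 1)) with hr
    have hr0 : 0 < r := by positivity
    have hlog : g k - g (k + 1) = Real.log r := by
      simp only [hg, hr]
      push_cast
      rw [show y + ((k:ℝ) + 1) = y + k + 1 by ring, show b + ((k:ℝ) + 1) = b + k + 1 by ring,
        Real.log_div hu.ne' hv.ne',
        Real.log_div (by positivity : (0:ℝ) < y + k + 1).ne'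
          (by positivity : (0:ℝ) < b + k + 1).ne',
        Real.log_div (by positivity : (0:ℝ) < (y + k) * (b + k + 1)).ne'
          (by positivity : (0:ℝ) < (b + k) * (y + k + 1)).ne',
        Real.log_mul hu.ne' (by positivity : (0:ℝ) < b + k + 1).ne',
        Real.log_mul hv.ne' (by positivity : (0:ℝ) < y + k + 1).ne']
      ring
    have e1 : r - 1 = (y - b) / ((b + k) * (y + k + 1)) := by
      rw [hr]; field_simp; ring
    have e2 : 1 / (b + k) - 1 / (y + k) = (y - b) / ((b + k) * (y + k)) := by
      field_simp
      ring
    have h3 : (y - b) / ((b + k) * (y + k + 1)) < (y - b) / ((b + k) * (y + k)) :=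
      div_lt_div_of_pos_left (by linarith) (by positivity) (by nlinarith)
    have h4 := Real.log_le_sub_one_of_pos hr0
    rw [hlog, e2]
    linarith [e1 ▸ h4]
  -- the gap
  set δ : ℝ := (1 / (b + (0:ℕ)) - 1 / (y + (0:ℕ))) - (g 0 - g 1) with hδ
  have hδ0 : 0 < δ := by
    have := hgk 0
    simp only [hδ]
    linarith
  have sum_ge : ∀ n : ℕ, 1 ≤ n →
      g 0 - g n + δ ≤ ∑ k ∈ Finset.range n, (1 / (b + k) - 1 / (y + k)) := by
    intro n hn
    have htel : ∑ k ∈ Finset.range n, (g k - g (k + 1)) = g 0 - g n :=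
      Finset.sum_range_sub' g n
    have h5 : δ ≤ ∑ k ∈ Finset.range n,
        ((1 / (b + k) - 1 / (y + k)) - (g k - g (k + 1))) := by
      have h0mem : (0:ℕ) ∈ Finset.range n := Finset.mem_range.mpr hn
      exact Finset.single_le_sum (f := fun k : ℕ =>
        (1 / (b + (k:ℝ)) - 1 / (y + k)) - (g k - g (k + 1)))
        (fun k _ => by linarith [hgk k]) h0mem
    rw [Finset.sum_sub_distrib, htel] at h5
    linarith
  -- choose n
  set n : ℕ := max 1 ⌈1 / δ⌉₊ with hn
  have hn1 : 1 ≤ n := le_max_left _ _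
  have hnδ : 1 / δ ≤ (n : ℝ) := by
    calc (1:ℝ)/δ ≤ (⌈1/δ⌉₊ : ℝ) := Nat.le_ceil _
    _ ≤ n := by exact_mod_cast Nat.cast_le.mpr (le_max_right _ _)
  have hsmall : 1 / (y + n) < δ := by
    rw [div_lt_iff₀ (by positivity)]
    have : 1 / δ < y + n := by linarith
    rw [div_lt_iff₀ hδ0] at this
    nlinarith
  -- bounds on the tail
  have hD1 : Real.log (y + n) - 1 / (y + n) ≤ digamma (y + n) :=
    log_sub_le_digamma (by positivity)
  have hD2 : digamma (b + n) ≤ Real.log (b + n) := digamma_le_log (by positivity)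
  -- values of g
  have hg0 : g 0 = -Real.log a := by
    simp only [hg, Nat.cast_zero, add_zero, hb]
    rw [Real.log_div hy0.ne' hb0.ne', Real.log_mul ha0.ne' hy0.ne']
    ring
  have hgn : g n = Real.log (y + n) - Real.log (b + n) := by
    simp only [hg]
    rw [Real.log_div (by positivity : (0:ℝ) < y + n).ne' (by positivity : (0:ℝ) < b + n).ne']
  have hS := sum_ge n hn1
  have hkey := key n
  rw [hkey]
  have := hS
  rw [hg0, hgn] at hS
  linarith
end

section
/- For all x > 0 and a with 0 < a < 1, the trigamma function satisfies ψ⁽¹⁾(x) < a · ψ⁽¹⁾(a·x). -/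
/-- The trigamma function `ψ⁽¹⁾ = ψ'`. -/
noncomputable def trigamma (x : ℝ) : ℝ := deriv digamma x

open Real Filter Set MeasureTheory Topology

namespace TrigammaAux


noncomputable def T (x : ℝ) : ℝ := ∑' k : ℕ, ((x + k) ^ 2)⁻¹

lemma summable_T {c : ℝ} (hc : 0 < c) : Summable (fun k : ℕ => ((c + k) ^ 2)⁻¹) := by
  have h := (Real.summable_one_div_nat_add_rpow c 2).mpr one_lt_two
  refine h.congr fun k => ?_
  rw [abs_of_pos (by positivity), one_div,
    show ((2:ℝ)) = ((2:ℕ):ℝ) by norm_num, Real.rpow_natCast, add_comm]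

noncomputable def gterm (m : ℕ) (z : ℝ) : ℝ := ((m : ℝ) + 1)⁻¹ - (z + m + 1)⁻¹

noncomputable def D (y : ℝ) : ℝ :=
  -Real.eulerMascheroniConstant - y⁻¹ + ∑' m : ℕ, gterm m y

lemma gterm_eq {m : ℕ} {z : ℝ} (hz : 0 < z) :
    gterm m z = z / (((m : ℝ) + 1) * (z + m + 1)) := by
  have h1 : ((m : ℝ) + 1) ≠ 0 := by positivity
  have h2 : (z + m + 1) ≠ 0 := by positivity
  rw [gterm]
  field_simp
  ring

lemma gterm_nonneg {m : ℕ} {z : ℝ} (hz : 0 < z) : 0 ≤ gterm m z := by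
  rw [gterm_eq hz]; positivity

lemma gterm_le {m : ℕ} {z C : ℝ} (hz : 0 < z) (hzC : z ≤ C) :
    gterm m z ≤ C * ((((m:ℝ) + 1)) ^ 2)⁻¹ := by
  rw [gterm_eq hz, sq, ← div_eq_mul_inv]
  refine div_le_div₀ (by linarith) hzC (by positivity) ?_
  have : ((m:ℝ) + 1) ≤ z + m + 1 := by linarith
  nlinarith [Nat.cast_nonneg (α := ℝ) m]

lemma summable_gterm {z : ℝ} (hz : 0 < z) : Summable (fun m : ℕ => gterm m z) := by
  refine Summable.of_nonneg_of_le (fun m => gterm_nonneg hz) (fun m => gterm_le hz le_rfl)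
    (((summable_T one_pos).congr (fun k : ℕ => by push_cast; ring_nf)).mul_left z)







/-- decomposition of the derivative of `logGammaSeq`. -/
lemma f'_eq (n : ℕ) {z : ℝ} (hz : 0 < z) :
    Real.log n - ∑ m ∈ Finset.range (n + 1), (z + m)⁻¹
      = ((Real.log n - ∑ m ∈ Finset.range n, ((m:ℝ) + 1)⁻¹) - z⁻¹)
        + ∑ m ∈ Finset.range n, gterm m z := by
  rw [Finset.sum_range_succ' (fun m : ℕ => (z + (m:ℝ))⁻¹) n]
  have h1 : ∀ m : ℕ, (z + ((m + 1 : ℕ) : ℝ))⁻¹ = (z + m + 1)⁻¹ := by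
    intro m; push_cast; ring_nf
  rw [Finset.sum_congr rfl fun m _ => h1 m]
  unfold gterm
  rw [Finset.sum_sub_distrib]
  push_cast
  ring

lemma hasDerivAt_logGammaSeq (n : ℕ) {z : ℝ} (hz : 0 < z) :
    HasDerivAt (fun w => Real.BohrMollerup.logGammaSeq w n)
      (Real.log n - ∑ m ∈ Finset.range (n + 1), (z + m)⁻¹) z := by
  unfold Real.BohrMollerup.logGammaSeq
  have h1 : HasDerivAt (fun w : ℝ => w * Real.log n + Real.log (Nat.factorial n)) (Real.log n) z :=
    (hasDerivAt_mul_const _).add_const _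
  have h2 : HasDerivAt (fun w : ℝ => ∑ m ∈ Finset.range (n + 1), Real.log (w + m))
      (∑ m ∈ Finset.range (n + 1), (z + m)⁻¹) z := by
    apply HasDerivAt.fun_sum
    intro m _
    have hzm : z + (m : ℝ) ≠ 0 := by positivity
    have := ((hasDerivAt_id z).add_const (m : ℝ)).log hzm
    simpa [one_div] using this
  exact h1.sub h2

lemma hasDerivAt_log_Gamma {y : ℝ} (hy : 0 < y) :
    HasDerivAt (fun z => Real.log (Real.Gamma z)) (D y) y := by
  have hy2 : 0 < y / 2 := by linarith
  set s : Set ℝ := Ioo (y / 2) (y + 1) with hs_def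
  have hys : y ∈ s := ⟨by linarith, by linarith⟩
  have hpos : ∀ z ∈ s, 0 < z := fun z hz => lt_trans hy2 hz.1
  -- uniform convergence of the derivatives
  have hc : Tendsto (fun n : ℕ => Real.log n - ∑ m ∈ Finset.range n, ((m:ℝ) + 1)⁻¹) atTop
      (𝓝 (-Real.eulerMascheroniConstant)) := by
    have h := Real.tendsto_harmonic_sub_log.neg
    refine h.congr fun n => ?_
    have : ((harmonic n : ℝ)) = ∑ m ∈ Finset.range n, ((m:ℝ) + 1)⁻¹ := by
      rw [harmonic]
      push_cast
      rfl
    rw [this]; ring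
  have hP : TendstoUniformlyOn
      (fun (n : ℕ) (z : ℝ) => (Real.log n - ∑ m ∈ Finset.range n, ((m:ℝ) + 1)⁻¹) - z⁻¹)
      (fun z => -Real.eulerMascheroniConstant - z⁻¹) atTop s := by
    rw [Metric.tendstoUniformlyOn_iff]
    intro ε hε
    filter_upwards [Metric.tendsto_nhds.mp hc ε hε] with n hn z _
    rw [Real.dist_eq] at hn ⊢
    rw [abs_sub_comm] at hn
    convert hn using 2
    ring
  have hS : TendstoUniformlyOn
      (fun (n : ℕ) (z : ℝ) => ∑ m ∈ Finset.range n, gterm m z)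
      (fun z => ∑' m : ℕ, gterm m z) atTop s := by
    apply tendstoUniformlyOn_tsum_nat
      (u := fun m : ℕ => (y + 1) * ((((m:ℝ) + 1)) ^ 2)⁻¹)
      (((summable_T one_pos).congr (fun k : ℕ => by push_cast; ring_nf)).mul_left (y+1))
    intro m z hz
    rw [Real.norm_eq_abs, abs_of_nonneg (gterm_nonneg (hpos z hz))]
    exact gterm_le (hpos z hz) (le_of_lt hz.2)
  have huniform : TendstoUniformlyOn
      (fun (n : ℕ) (z : ℝ) => Real.log n - ∑ m ∈ Finset.range (n + 1), (z + m)⁻¹)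
      D atTop s := by
    have := hP.add hS
    exact this.congr (Eventually.of_forall fun n z hz => (f'_eq n (hpos z hz)).symm)
  exact hasDerivAt_of_tendstoUniformlyOn isOpen_Ioo huniform
    (Eventually.of_forall fun n z hz => hasDerivAt_logGammaSeq n (hpos z hz))
    (fun z hz => Real.BohrMollerup.tendsto_log_gamma (hpos z hz)) hys








lemma digamma_eq {y : ℝ} (hy : 0 < y) : digamma y = D y :=
  (hasDerivAt_log_Gamma hy).deriv

lemma hasDerivAt_D {x : ℝ} (hx : 0 < x) : HasDerivAt D (T x) x := by
  have hx2 : 0 < x / 2 := by linarith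
  have hsum : HasDerivAt (fun z => ∑' m : ℕ, gterm m z)
      (∑' m : ℕ, ((x + m + 1) ^ 2)⁻¹) x := by
    refine hasDerivAt_of_tendstoUniformlyOn (l := atTop) (isOpen_Ioi (a := x / 2))
      (g' := fun (z : ℝ) => ∑' m : ℕ, ((z + m + 1) ^ 2)⁻¹)
      (g := fun (z : ℝ) => ∑' m : ℕ, gterm m z)
      (f' := fun (n : ℕ) (z : ℝ) => ∑ m ∈ Finset.range n, ((z + m + 1) ^ 2)⁻¹)
      (f := fun (n : ℕ) (z : ℝ) => ∑ m ∈ Finset.range n, gterm m z) ?_ ?_ ?_ ?_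
    · apply tendstoUniformlyOn_tsum_nat
        (u := fun m : ℕ => (((x / 2 + 1) + m) ^ 2)⁻¹)
        (summable_T (by linarith : (0:ℝ) < x / 2 + 1))
      intro m z hz
      rw [mem_Ioi] at hz
      rw [Real.norm_eq_abs, abs_of_nonneg (by positivity)]
      have hm : (0:ℝ) ≤ m := Nat.cast_nonneg m
      refine inv_anti₀ (by positivity) ?_
      nlinarith
    · refine Eventually.of_forall fun n z hz => ?_
      apply HasDerivAt.fun_sum
      intro m _
      rw [mem_Ioi] at hz
      have hzm : z + (m:ℝ) + 1 ≠ 0 := by nlinarith [Nat.cast_nonneg (α := ℝ) m]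
      have hinv : HasDerivAt (fun w : ℝ => (w + m + 1)⁻¹) (-((z + m + 1) ^ 2)⁻¹) z := by
        have h0 : HasDerivAt (fun w : ℝ => w + m + 1) 1 z := by
          simpa [add_assoc] using (hasDerivAt_id z).add_const ((m:ℝ) + 1)
        have := h0.inv hzm
        simpa [neg_div, one_div, Pi.inv_def] using this
      have := (hasDerivAt_const z ((m:ℝ) + 1)⁻¹).sub hinv
      rw [zero_sub, neg_neg] at this
      exact this
    · intro z hz
      rw [mem_Ioi] at hz
      exact (summable_gterm (by linarith)).hasSum.tendsto_sum_nat
    · exact mem_Ioi.mpr (by linarith)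
  have h1 : HasDerivAt (fun z : ℝ => -Real.eulerMascheroniConstant - z⁻¹) ((x ^ 2)⁻¹) x := by
    have := (hasDerivAt_inv hx.ne').const_sub (-Real.eulerMascheroniConstant)
    simpa using this
  have hD := h1.add hsum
  have hT : T x = (x ^ 2)⁻¹ + ∑' m : ℕ, ((x + m + 1) ^ 2)⁻¹ := by
    rw [T, Summable.tsum_eq_zero_add (summable_T hx)]
    congr 1
    · norm_num
    · exact tsum_congr fun m => by push_cast; ring
  rw [hT]
  exact hD

lemma trigamma_eq {x : ℝ} (hx : 0 < x) : trigamma x = T x := by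
  have hev : digamma =ᶠ[𝓝 x] D := by
    filter_upwards [Ioi_mem_nhds hx] with z hz using digamma_eq hz
  rw [trigamma, hev.deriv_eq, (hasDerivAt_D hx).deriv]





lemma integral_t_exp {b : ℝ} (hb : 0 < b) :
    ∫ t in Ioi (0:ℝ), t * Real.exp (-(b * t)) = (b ^ 2)⁻¹ := by
  have h := Real.integral_rpow_mul_exp_neg_mul_Ioi (a := 2) two_pos hb
  rw [Real.Gamma_two, mul_one] at h
  calc ∫ t in Ioi (0:ℝ), t * Real.exp (-(b * t))
      = ∫ t in Ioi (0:ℝ), t ^ ((2:ℝ) - 1) * Real.exp (-(b * t)) := by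
        refine setIntegral_congr_fun measurableSet_Ioi fun t _ => ?_
        norm_num
    _ = (1 / b) ^ (2:ℝ) := h
    _ = (b ^ 2)⁻¹ := by
        rw [show ((2:ℝ)) = ((2:ℕ):ℝ) by norm_num, Real.rpow_natCast]
        rw [one_div, inv_pow]

lemma integrable_t_exp {b : ℝ} (hb : 0 < b) :
    IntegrableOn (fun t => t * Real.exp (-(b * t))) (Ioi (0:ℝ)) := by
  have h := integrableOn_rpow_mul_exp_neg_mul_rpow (s := 1) (p := 1) (by norm_num) one_pos hb
  refine h.congr_fun (fun t ht => by simp [neg_mul]) measurableSet_Ioi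

lemma denom_pos {t : ℝ} (ht : 0 < t) : 0 < 1 - Real.exp (-t) := by
  have : Real.exp (-t) < 1 := Real.exp_lt_one_iff.mpr (by linarith)
  linarith

lemma continuousOn_integrand (b : ℝ) :
    ContinuousOn (fun t => t * Real.exp (-(b * t)) / (1 - Real.exp (-t))) (Ioi (0:ℝ)) := by
  apply ContinuousOn.div
  · exact (continuous_id.mul (by continuity)).continuousOn
  · exact (by continuity : Continuous fun t : ℝ => 1 - Real.exp (-t)).continuousOn
  · exact fun t ht => (denom_pos (mem_Ioi.mp ht)).ne'

lemma frac_le {t : ℝ} (ht : 0 < t) : t / (1 - Real.exp (-t)) ≤ 1 + t := by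
  have hd := denom_pos ht
  rw [div_le_iff₀ hd]
  have h1 : (t + 1) * Real.exp (-t) ≤ 1 := by
    have h2 := mul_le_mul_of_nonneg_right (Real.add_one_le_exp t) (Real.exp_pos (-t)).le
    rwa [← Real.exp_add, add_neg_cancel, Real.exp_zero] at h2
  nlinarith [Real.exp_pos (-t)]

lemma integrable_integrand {b : ℝ} (hb : 0 < b) :
    IntegrableOn (fun t => t * Real.exp (-(b * t)) / (1 - Real.exp (-t))) (Ioi (0:ℝ)) := by
  have hbound : IntegrableOn (fun t => Real.exp (-(b * t)) + t * Real.exp (-(b * t))) (Ioi (0:ℝ)) := by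
    refine Integrable.add ?_ (integrable_t_exp hb)
    simpa [neg_mul, IntegrableOn] using exp_neg_integrableOn_Ioi 0 hb
  refine hbound.mono' ((continuousOn_integrand b).aestronglyMeasurable measurableSet_Ioi) ?_
  filter_upwards [ae_restrict_mem measurableSet_Ioi] with t ht
  rw [mem_Ioi] at ht
  have hd := denom_pos ht
  have he := Real.exp_pos (-(b * t))
  rw [Real.norm_eq_abs, abs_of_nonneg (by positivity)]
  have h1 : t * Real.exp (-(b * t)) / (1 - Real.exp (-t))
      = (t / (1 - Real.exp (-t))) * Real.exp (-(b * t)) := by ring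
  rw [h1]
  nlinarith [frac_le ht]

lemma T_eq_integral {x : ℝ} (hx : 0 < x) :
    T x = ∫ t in Ioi (0:ℝ), t * Real.exp (-(x * t)) / (1 - Real.exp (-t)) := by
  have hxk : ∀ k : ℕ, (0:ℝ) < x + k := fun k => by positivity
  have hint : ∀ k : ℕ, IntegrableOn (fun t => t * Real.exp (-((x + k) * t))) (Ioi (0:ℝ)) :=
    fun k => integrable_t_exp (hxk k)
  have hswap :
      (∫ t in Ioi (0:ℝ), ∑' k : ℕ, t * Real.exp (-((x + k) * t)))
        = ∑' k : ℕ, ∫ t in Ioi (0:ℝ), t * Real.exp (-((x + k) * t)) := by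
    have hnorm : ∀ k : ℕ, (∫ t in Ioi (0:ℝ), ‖t * Real.exp (-((x + k) * t))‖) = ((x + k) ^ 2)⁻¹ := by
      intro k
      rw [← integral_t_exp (hxk k)]
      refine setIntegral_congr_fun measurableSet_Ioi fun t ht => ?_
      have ht' : (0:ℝ) ≤ t := (mem_Ioi.mp ht).le
      rw [Real.norm_eq_abs, abs_of_nonneg (by positivity)]
    exact (MeasureTheory.integral_tsum_of_summable_integral_norm hint
      ((summable_T hx).congr fun k => (hnorm k).symm)).symm
  have hgeom : ∀ t ∈ Ioi (0:ℝ),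
      (∑' k : ℕ, t * Real.exp (-((x + k) * t)))
        = t * Real.exp (-(x * t)) / (1 - Real.exp (-t)) := by
    intro t ht
    rw [mem_Ioi] at ht
    have hlt : Real.exp (-t) < 1 := Real.exp_lt_one_iff.mpr (by linarith)
    have hterm : ∀ k : ℕ, t * Real.exp (-((x + k) * t))
        = (t * Real.exp (-(x * t))) * Real.exp (-t) ^ k := by
      intro k
      rw [show -((x + (k:ℕ)) * t) = -(x * t) + (k:ℕ) * (-t) by push_cast; ring,
        Real.exp_add, Real.exp_nat_mul]
      ring
    calc (∑' k : ℕ, t * Real.exp (-((x + k) * t)))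
        = ∑' k : ℕ, (t * Real.exp (-(x * t))) * Real.exp (-t) ^ k := tsum_congr hterm
      _ = (t * Real.exp (-(x * t))) * ∑' k : ℕ, Real.exp (-t) ^ k := tsum_mul_left
      _ = t * Real.exp (-(x * t)) / (1 - Real.exp (-t)) := by
          rw [tsum_geometric_of_lt_one (Real.exp_nonneg _) hlt, div_eq_mul_inv]
  calc T x = ∑' k : ℕ, ∫ t in Ioi (0:ℝ), t * Real.exp (-((x + k) * t)) :=
        tsum_congr fun k => (integral_t_exp (hxk k)).symm
    _ = ∫ t in Ioi (0:ℝ), ∑' k : ℕ, t * Real.exp (-((x + k) * t)) := hswap.symm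
    _ = ∫ t in Ioi (0:ℝ), t * Real.exp (-(x * t)) / (1 - Real.exp (-t)) :=
        setIntegral_congr_fun measurableSet_Ioi hgeom





/-- key convexity inequality : `a (1 - e^{-t}) < 1 - e^{-at}` for `0 < a < 1`, `t > 0`. -/
lemma key_ineq {a t : ℝ} (ha0 : 0 < a) (ha1 : a < 1) (ht : 0 < t) :
    a * (1 - Real.exp (-t)) < 1 - Real.exp (-(a * t)) := by
  have h := strictConvexOn_exp.2 (mem_univ (0:ℝ)) (mem_univ (-t))
    (by linarith : (0:ℝ) ≠ -t) (by linarith : 0 < 1 - a) ha0 (by ring)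
  simp only [smul_eq_mul, mul_zero, zero_add, Real.exp_zero, mul_one] at h
  rw [show a * -t = -(a * t) by ring] at h
  linarith


end TrigammaAux

open TrigammaAux in
/-- For all `x > 0` and `0 < a < 1`, `ψ⁽¹⁾(x) < a ψ⁽¹⁾(a x)`. -/
theorem trigamma_lt (a : ℝ) (ha0 : 0 < a) (ha1 : a < 1) :
    ∀ x : ℝ, 0 < x → trigamma x < a * trigamma (a * x) := by
  intro x hx
  have hu : 0 < a * x := mul_pos ha0 hx
  rw [trigamma_eq hx, trigamma_eq hu, T_eq_integral hx, T_eq_integral hu]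
  set g : ℝ → ℝ := fun t => t * Real.exp (-(x * t)) / (1 - Real.exp (-t)) with hg
  set h : ℝ → ℝ := fun t => t * Real.exp (-(a * x * t)) / (1 - Real.exp (-t)) with hh
  -- change of variables in the integral for `T x`
  have hchg : (∫ t in Ioi (0:ℝ), g t) = ∫ t in Ioi (0:ℝ), a * g (a * t) := by
    rw [MeasureTheory.integral_const_mul, MeasureTheory.integral_comp_mul_left_Ioi g 0 ha0,
      mul_zero, smul_eq_mul, ← mul_assoc, mul_inv_cancel₀ ha0.ne', one_mul]
  rw [hchg, ← MeasureTheory.integral_const_mul]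
  set F : ℝ → ℝ := fun t => a * g (a * t) with hF
  set G : ℝ → ℝ := fun t => a * h t with hG
  have hFG : ∀ t ∈ Ioi (0:ℝ), F t < G t := by
    intro t ht
    rw [mem_Ioi] at ht
    have hat : 0 < a * t := mul_pos ha0 ht
    have hd1 := denom_pos hat
    have hd2 := denom_pos ht
    have hE : (0:ℝ) < Real.exp (-(a * x * t)) := Real.exp_pos _
    simp only [hF, hG, hg, hh]
    rw [show x * (a * t) = a * x * t by ring]
    rw [← mul_div_assoc, ← mul_div_assoc, div_lt_div_iff₀ hd1 hd2]
    have hkey := key_ineq ha0 ha1 ht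
    nlinarith [mul_lt_mul_of_pos_left hkey (mul_pos (mul_pos ha0 ht) hE)]
  -- integrability
  have hGint : IntegrableOn G (Ioi (0:ℝ)) := by
    rw [hG, hh]
    exact (integrable_integrand hu).const_mul a
  have hFmeas : AEStronglyMeasurable F (volume.restrict (Ioi (0:ℝ))) := by
    have hcomp : ContinuousOn (fun t : ℝ => g (a * t)) (Ioi (0:ℝ)) := by
      rw [hg]
      exact (continuousOn_integrand x).comp ((continuous_mul_left a).continuousOn)
        (fun t ht => mem_Ioi.mpr (mul_pos ha0 (mem_Ioi.mp ht)))
    have hcont : ContinuousOn F (Ioi (0:ℝ)) := continuousOn_const.mul hcomp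
    exact hcont.aestronglyMeasurable measurableSet_Ioi
  have hFnonneg : ∀ t ∈ Ioi (0:ℝ), 0 ≤ F t := by
    intro t ht
    rw [mem_Ioi] at ht
    have hat : 0 < a * t := mul_pos ha0 ht
    have hd1 := denom_pos hat
    simp only [hF, hg]
    positivity
  have hFint : IntegrableOn F (Ioi (0:ℝ)) := by
    refine hGint.mono' hFmeas ?_
    filter_upwards [ae_restrict_mem measurableSet_Ioi] with t ht
    rw [Real.norm_eq_abs, abs_of_nonneg (hFnonneg t ht)]
    exact (hFG t ht).le
  -- strict inequality
  have hpos : 0 < ∫ t in Ioi (0:ℝ), (G t - F t) := by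
    rw [setIntegral_pos_iff_support_of_nonneg_ae]
    · refine lt_of_lt_of_le (b := volume (Ioi (0:ℝ))) ?_ (measure_mono ?_)
      · rw [Real.volume_Ioi]; exact ENNReal.zero_lt_top
      · intro t ht
        exact ⟨by simpa using (sub_pos.mpr (hFG t ht)).ne', ht⟩
    · filter_upwards [ae_restrict_mem measurableSet_Ioi] with t ht
      exact sub_nonneg.mpr (hFG t ht).le
    · exact hGint.sub hFint
  rw [integral_sub hGint hFint] at hpos
  linarith
end
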